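/- Let ψ₁: ℝ → (0,∞) be an admissible weight function and let ρ: ℝ → ℝ be continuous, bounded, and sigmoidal, i.e. lim_{z→−∞} ρ(z) = 0 and lim_{z→∞} ρ(z) = 1, with lim_{z→±∞} |ρ(az+b)|/ψ₁(z) = 0 for all a ∈ ℕ₀ and b ∈ ℝ. Then ρ is ψ₁-discriminatory (for every signed Radon measure μ on ℝ with ∫_ℝ ψ₁ d|μ| < ∞ satisfying ∫_ℝ ρ(az+b) μ(dz) = 0 for all a ∈ ℕ₀ and b ∈ ℝ it follows that μ = 0), and consequently the set 𝒩𝒩^ρ := { z ↦ Σ_{n=1}^N w_n ρ(a_n z + b_n) : N ∈ ℕ, a_n ∈ ℕ₀, w_n, b_n ∈ ℝ } is dense in 𝓑_{ψ₁}(ℝ). -/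

import Mathlib

open Filter Topology MeasureTheory

/-- `f` belongs to `𝓑_{ψ₁}(ℝ)`, the closure of the bounded continuous functions with
respect to the weighted norm `‖f‖ = sup_z |f z| / ψ₁ z`. -/
def MemBpsi (ψ₁ : ℝ → ℝ) (f : ℝ → ℝ) : Prop :=
  ∀ ε > (0 : ℝ), ∃ g : ℝ → ℝ, Continuous g ∧ (∃ C : ℝ, ∀ z, |g z| ≤ C) ∧
    ∀ z, |f z - g z| ≤ ε * ψ₁ z

/-- The set of one-dimensional neural networks
`𝒩𝒩^ρ = { z ↦ Σ_{n=1}^N w_n ρ(a_n z + b_n) : N ∈ ℕ, a_n ∈ ℕ₀, w_n, b_n ∈ ℝ }`. -/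
def NNset (ρ : ℝ → ℝ) : Set (ℝ → ℝ) :=
  {φ | ∃ (N : ℕ) (a : Fin N → ℕ) (w b : Fin N → ℝ),
    φ = fun z => ∑ n, w n * ρ ((a n : ℝ) * z + b n)}

/-- The integral of `f` against a signed measure `μ`, via its Jordan decomposition
`μ = μ⁺ - μ⁻`. -/
noncomputable def signedIntegral (μ : SignedMeasure ℝ) (f : ℝ → ℝ) : ℝ :=
  (∫ z, f z ∂μ.toJordanDecomposition.posPart) - (∫ z, f z ∂μ.toJordanDecomposition.negPart)

/-! For a finite measure `m`, dominated convergence gives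
`∫ ρ(a (z - t) + c) dm → m (t, ∞) + ρ(c) m {t}` as `a → ∞`, and letting `c → ∞` recovers
`m [t, ∞)`. Equal `ρ`-integrals of the two Jordan parts of `μ` therefore force them to agree on
all half-lines, so they coincide and `μ = 0`.

For density, `ψ₁` is bounded below by a positive constant and exceeds any bound off a compact
set. A Urysohn cutoff thus reduces an element of `𝓑_{ψ₁}(ℝ)`, up to `ε ψ₁`, to a compactly
supported continuous `h`, which it suffices to approximate uniformly. On a grid of small mesh `s`,
`h` is within `δ` of a telescoping sum of Heaviside steps of height at most `δ`; replacing each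
step `H(z - x_k)` by `ρ(A (z - x_k))` with `A` large costs little at the at most two grid points
within `s` of `z` and almost nothing at the others. -/

open Set

section Weight

variable {X : Type*} [TopologicalSpace X] [T2Space X] {ψ : X → ℝ}

theorem lowerSemicontinuous_of_isCompact_sublevel (hpos : ∀ x, 0 < ψ x)
    (hadm : ∀ R > 0, IsCompact {x | ψ x ≤ R}) : LowerSemicontinuous ψ := by
  refine lowerSemicontinuous_iff_isClosed_preimage.2 fun R => ?_
  rcases le_or_gt R 0 with hR | hR
  · convert isClosed_empty
    exact eq_empty_of_forall_notMem fun x hx => (hpos x).not_ge (le_trans hx hR)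
  · exact (hadm R hR).isClosed

theorem exists_pos_le_of_isCompact_sublevel (hpos : ∀ x, 0 < ψ x)
    (hadm : ∀ R > 0, IsCompact {x | ψ x ≤ R}) : ∃ c > 0, ∀ x, c ≤ ψ x := by
  rcases isEmpty_or_nonempty X with _ | ⟨⟨x₀⟩⟩
  · exact ⟨1, one_pos, fun x => isEmptyElim x⟩
  obtain ⟨m, hm, hmin⟩ := ((lowerSemicontinuous_of_isCompact_sublevel hpos hadm)
    |>.lowerSemicontinuousOn {x | ψ x ≤ ψ x₀}).exists_isMinOn ⟨x₀, le_refl (ψ x₀)⟩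
      (hadm (ψ x₀) (hpos x₀))
  refine ⟨ψ m, hpos m, fun x => ?_⟩
  rcases le_or_gt (ψ x) (ψ x₀) with hx | hx
  · exact hmin hx
  · exact (show ψ m ≤ ψ x₀ from hm).trans hx.le

theorem exists_hasCompactSupport_abs_sub_le_mul [LocallyCompactSpace X] (hpos : ∀ x, 0 < ψ x)
    (hadm : ∀ R > 0, IsCompact {x | ψ x ≤ R}) {g : X → ℝ} (hg : Continuous g) {C : ℝ}
    (hC : ∀ x, |g x| ≤ C) {ε : ℝ} (hε : 0 < ε) :
    ∃ h : X → ℝ, Continuous h ∧ HasCompactSupport h ∧ ∀ x, |g x - h x| ≤ ε * ψ x := by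
  obtain ⟨χ, hχK, -, hχc, hχ01⟩ := exists_continuous_one_zero_of_isCompact
    (hadm (|C| / ε + 1) (by positivity)) isClosed_empty (disjoint_empty _)
  refine ⟨fun x => g x * χ x, hg.mul χ.continuous, hχc.mul_left, fun x => ?_⟩
  by_cases hx : ψ x ≤ |C| / ε + 1
  · simpa [hχK hx] using mul_nonneg hε.le (hpos x).le
  · have hψ : |C| < ε * ψ x := by
      rw [← div_lt_iff₀' hε]; linarith
    have h1χ : |1 - χ x| ≤ 1 := by
      rw [abs_le]; constructor <;> linarith [(hχ01 x).1, (hχ01 x).2]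
    calc |g x - g x * χ x| = |g x| * |1 - χ x| := by rw [← abs_mul, mul_sub, mul_one]
      _ ≤ |C| * 1 := mul_le_mul ((hC x).trans (le_abs_self C)) h1χ (abs_nonneg _) (abs_nonneg _)
      _ ≤ ε * ψ x := by linarith

end Weight

theorem sum_range_mem_NNset (ρ : ℝ → ℝ) (N : ℕ) (a : ℕ → ℕ) (w b : ℕ → ℝ) :
    (fun z => ∑ k ∈ Finset.range N, w k * ρ (a k * z + b k)) ∈ NNset ρ :=
  ⟨N, fun n => a n, fun n => w n, fun n => b n,
    funext fun z => (Fin.sum_univ_eq_sum_range (fun k => w k * ρ (a k * z + b k)) N).symm⟩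

-- Open at the jump, so that `#{k | x₀ + k * s < z} = ⌈(z - x₀) / s⌉₊` exactly.
noncomputable def heaviside (u : ℝ) : ℝ := if 0 < u then 1 else 0

theorem abs_heaviside_le_one (u : ℝ) : |heaviside u| ≤ 1 := by
  unfold heaviside; split_ifs <;> norm_num

theorem tendstoUniformlyOn_comp_mul_heaviside {ρ : ℝ → ℝ} (h₀ : Tendsto ρ atBot (𝓝 0))
    (h₁ : Tendsto ρ atTop (𝓝 1)) {s : ℝ} (hs : 0 < s) :
    TendstoUniformlyOn (fun (A : ℕ) u => ρ (A * u)) heaviside atTop {u | s ≤ |u|} := by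
  refine Metric.tendstoUniformlyOn_iff.2 fun δ hδ => ?_
  obtain ⟨T₁, hT₁⟩ := eventually_atTop.1 (Metric.tendsto_nhds.1 h₁ δ hδ)
  obtain ⟨T₀, hT₀⟩ := eventually_atBot.1 (Metric.tendsto_nhds.1 h₀ δ hδ)
  filter_upwards [eventually_ge_atTop ⌈max T₁ (-T₀) / s⌉₊] with A hA u hu
  have hAs : max T₁ (-T₀) ≤ A * s := (div_le_iff₀ hs).1 (Nat.ceil_le.1 hA)
  have hA0 : (0 : ℝ) ≤ A := A.cast_nonneg
  rcases lt_or_ge 0 u with hu0 | hu0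
  · rw [abs_of_pos hu0] at hu
    rw [heaviside, if_pos hu0, dist_comm]
    exact hT₁ _ (by nlinarith [le_max_left T₁ (-T₀)])
  · rw [abs_of_nonpos hu0] at hu
    rw [heaviside, if_neg hu0.not_gt, dist_comm]
    exact hT₀ _ (by nlinarith [le_max_right T₁ (-T₀)])

theorem card_filter_abs_sub_lt_le_two (x₀ : ℝ) {s : ℝ} (hs : 0 < s) (z : ℝ) (N : ℕ) :
    ((Finset.range N).filter fun k : ℕ => |z - (x₀ + k * s)| < s).card ≤ 2 := by
  set y := (z - x₀) / s
  calc _ ≤ (Finset.Icc ⌊y⌋₊ (⌊y⌋₊ + 1)).card := Finset.card_le_card fun k hk => ?_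
    _ = 2 := by simp only [Nat.card_Icc]; omega
  obtain ⟨hlo, hhi⟩ := abs_lt.1 (Finset.mem_filter.1 hk).2
  have hky : y < k + 1 := by rw [div_lt_iff₀ hs]; linarith
  have hyk : (k : ℝ) < y + 1 := by rw [← sub_lt_iff_lt_add, lt_div_iff₀ hs]; linarith
  have h₁ : ⌊y⌋₊ < k + 1 := (Nat.floor_lt' k.succ_ne_zero).2 (by exact_mod_cast hky)
  have h₂ : k < ⌊y⌋₊ + 2 := by
    have := Nat.lt_floor_add_one y
    exact_mod_cast (by linarith : (k : ℝ) < ⌊y⌋₊ + 2)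
  exact Finset.mem_Icc.2 ⟨by omega, by omega⟩

theorem abs_sum_mul_le_of_abs_le_of_far {c e : ℕ → ℝ} {δ B η x₀ s z : ℝ} (hs : 0 < s)
    (hc : ∀ k, |c k| ≤ δ) (hB : ∀ k, |e k| ≤ B) (hη : 0 ≤ η)
    (hfar : ∀ k : ℕ, s ≤ |z - (x₀ + k * s)| → |e k| ≤ η) (N : ℕ) :
    |∑ k ∈ Finset.range N, c k * e k| ≤ δ * (2 * B + N * η) := by
  have hδ : 0 ≤ δ := (abs_nonneg _).trans (hc 0)
  have he : ∀ k : ℕ, |e k| ≤ (if |z - (x₀ + k * s)| < s then B else 0) + η := by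
    intro k
    split_ifs with hk
    · linarith [hB k]
    · linarith [hfar k (not_lt.1 hk)]
  have hnear := card_filter_abs_sub_lt_le_two x₀ hs z N
  calc |∑ k ∈ Finset.range N, c k * e k| ≤ ∑ k ∈ Finset.range N, |c k * e k| :=
        Finset.abs_sum_le_sum_abs _ _
    _ ≤ ∑ k ∈ Finset.range N, δ * ((if |z - (x₀ + k * s)| < s then B else 0) + η) := by
        gcongr with k
        rw [abs_mul]
        exact mul_le_mul (hc k) (he k) (abs_nonneg _) hδ
    _ = δ * (((Finset.range N).filter fun k : ℕ => |z - (x₀ + k * s)| < s).card * B + N * η) := by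
        rw [← Finset.mul_sum, Finset.sum_add_distrib, ← Finset.sum_filter]
        simp
    _ ≤ δ * (2 * B + N * η) := by
        gcongr
        · exact (abs_nonneg _).trans (hB 0)
        · exact_mod_cast hnear

theorem filter_range_lt_eq_range_min_ceil (x₀ : ℝ) {s : ℝ} (hs : 0 < s) (z : ℝ) (N : ℕ) :
    (Finset.range N).filter (fun k : ℕ => x₀ + k * s < z) =
      Finset.range (min N ⌈(z - x₀) / s⌉₊) := by
  ext k
  simp only [Finset.mem_filter, Finset.mem_range, lt_min_iff, Nat.lt_ceil, lt_div_iff₀ hs]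
  constructor <;> rintro ⟨hk, hz⟩ <;> exact ⟨hk, by linarith⟩

theorem sum_range_sub_mul_heaviside (G : ℕ → ℝ) (x₀ : ℝ) {s : ℝ} (hs : 0 < s) (z : ℝ) (N : ℕ) :
    ∑ k ∈ Finset.range N, (G (k + 1) - G k) * heaviside (z - (x₀ + k * s)) =
      G (min N ⌈(z - x₀) / s⌉₊) - G 0 := by
  simp only [heaviside, sub_pos, mul_ite, mul_one, mul_zero]
  rw [← Finset.sum_filter, filter_range_lt_eq_range_min_ceil x₀ hs, Finset.sum_range_sub]

theorem abs_sum_sub_mul_heaviside_sub_le {h : ℝ → ℝ} {δ x₀ s : ℝ} (hs : 0 < s) {N : ℕ}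
    (hsupp : ∀ z ∉ Ioo x₀ (x₀ + N * s), h z = 0)
    (hosc : ∀ y z, |y - z| ≤ s → |h y - h z| ≤ δ) (z : ℝ) :
    |∑ k ∈ Finset.range (N + 1),
        (h (x₀ + k * s) - h (x₀ + k * s - s)) * heaviside (z - (x₀ + k * s)) - h z| ≤ δ := by
  have hδ : 0 ≤ δ := (abs_nonneg _).trans (hosc z z (by simpa using hs.le))
  have hleft : h (x₀ - s) = 0 := hsupp _ fun hx => by linarith [hx.1]
  have key := sum_range_sub_mul_heaviside (fun k : ℕ => h (x₀ + k * s - s)) x₀ hs z (N + 1)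
  simp only [Nat.cast_add, Nat.cast_one, Nat.cast_zero, zero_mul, add_zero, add_mul, one_mul,
    ← add_assoc, add_sub_cancel_right, hleft, sub_zero] at key
  rw [key]
  rcases le_or_gt z x₀ with hz | hz
  · rw [Nat.ceil_eq_zero.2 (div_nonpos_of_nonpos_of_nonneg (by linarith) hs.le), min_zero,
      Nat.cast_zero, zero_mul, add_zero, hleft, hsupp z fun hx => by linarith [hx.1]]
    simpa using hδ
  rcases le_or_gt ⌈(z - x₀) / s⌉₊ (N + 1) with hn | hn
  · rw [min_eq_right hn]
    apply hosc
    have h₁ := Nat.le_ceil ((z - x₀) / s)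
    have h₂ := Nat.ceil_lt_add_one (div_pos (sub_pos.2 hz) hs).le
    rw [div_le_iff₀ hs] at h₁
    rw [← sub_lt_iff_lt_add, lt_div_iff₀ hs] at h₂
    rw [abs_le]; constructor <;> nlinarith
  · have hzN : x₀ + N * s < z := by
      have := Nat.lt_ceil.1 hn
      rw [lt_div_iff₀ hs] at this
      push_cast at this; nlinarith
    rw [min_eq_left hn.le, hsupp z fun hx => by linarith [hx.2], Nat.cast_add, Nat.cast_one,
      add_mul, one_mul, ← add_assoc, add_sub_cancel_right, hsupp _ fun hx => by linarith [hx.2]]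
    simpa using hδ

theorem exists_mem_NNset_abs_sub_le {ρ : ℝ → ℝ} {C : ℝ} (hC : ∀ z, |ρ z| ≤ C)
    (h₀ : Tendsto ρ atBot (𝓝 0)) (h₁ : Tendsto ρ atTop (𝓝 1)) {h : ℝ → ℝ} (hh : Continuous h)
    (hsupp : HasCompactSupport h) {ε : ℝ} (hε : 0 < ε) :
    ∃ φ ∈ NNset ρ, ∀ z, |h z - φ z| ≤ ε := by
  have hC0 : 0 ≤ C := (abs_nonneg _).trans (hC 0)
  -- the step error `δ` plus the network error `δ * (2 * (C + 1) + 1)` add up to `ε`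
  set δ := ε / (2 * C + 4)
  obtain ⟨s, hs, hosc⟩ : ∃ s > 0, ∀ y z, |y - z| ≤ s → |h y - h z| ≤ δ := by
    obtain ⟨η, hη, hηh⟩ := Metric.uniformContinuous_iff.1
      (hsupp.uniformContinuous_of_continuous hh) δ (by positivity)
    exact ⟨η / 2, half_pos hη, fun y z hyz => (hηh (by rw [Real.dist_eq]; linarith)).le⟩
  obtain ⟨x₀, N, hN⟩ : ∃ (x₀ : ℝ) (N : ℕ), ∀ z ∉ Ioo x₀ (x₀ + N * s), h z = 0 := by
    obtain ⟨R, hR⟩ := hsupp.isBounded.subset_closedBall 0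
    refine ⟨-(|R| + 1), ⌈2 * (|R| + 1) / s⌉₊, fun z hz => image_eq_zero_of_notMem_tsupport ?_⟩
    have hNs := (div_le_iff₀ hs).1 (Nat.le_ceil (2 * (|R| + 1) / s))
    intro hzR
    have := abs_le.1 ((mem_closedBall_zero_iff.1 (hR hzR)).trans (le_abs_self R))
    exact hz ⟨by linarith, by linarith⟩
  obtain ⟨A, hA⟩ := (Metric.tendstoUniformlyOn_iff.1
    (tendstoUniformlyOn_comp_mul_heaviside h₀ h₁ hs) (1 / (N + 1)) (by positivity)).exists
  set x : ℕ → ℝ := fun k => x₀ + k * s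
  set c : ℕ → ℝ := fun k => h (x k) - h (x k - s)
  refine ⟨_, sum_range_mem_NNset ρ (N + 1) (fun _ => A) c (fun k => -(A * x k)), fun z => ?_⟩
  have hstep := abs_sum_sub_mul_heaviside_sub_le hs hN hosc z
  have hnet := abs_sum_mul_le_of_abs_le_of_far (c := c)
    (e := fun k => ρ (A * (z - x k)) - heaviside (z - x k)) (B := C + 1) (η := 1 / (N + 1)) hs
    (fun k => hosc _ _ (by simp [abs_of_pos hs]))
    (fun k => (abs_sub _ _).trans (add_le_add (hC _) (abs_heaviside_le_one _)))
    (by positivity) (fun k hk => by rw [abs_sub_comm]; exact (hA _ hk).le) (N + 1)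
  have hφ : ∀ k, (A : ℝ) * z + -(A * x k) = A * (z - x k) := fun k => by ring
  calc _ = |-(∑ k ∈ Finset.range (N + 1), c k * heaviside (z - x k) - h z)
        - ∑ k ∈ Finset.range (N + 1), c k * (ρ (A * (z - x k)) - heaviside (z - x k))| := by
        simp only [hφ, mul_sub, Finset.sum_sub_distrib]; ring_nf
    _ ≤ δ + δ * (2 * (C + 1) + (N + 1 : ℕ) * (1 / (N + 1))) :=
        (abs_sub _ _).trans (by rw [abs_neg]; exact add_le_add hstep hnet)
    _ = ε := by
        rw [Nat.cast_succ, mul_one_div_cancel (by positivity)]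
        simp only [δ]
        field_simp
        ring

section Discriminatory

variable {ρ : ℝ → ℝ}

theorem tendsto_comp_natCast_mul_sub_add (h₀ : Tendsto ρ atBot (𝓝 0))
    (h₁ : Tendsto ρ atTop (𝓝 1)) (t c z : ℝ) :
    Tendsto (fun a : ℕ => ρ (a * (z - t) + c)) atTop
      (𝓝 ((Ioi t).indicator 1 z + ({t} : Set ℝ).indicator (fun _ => ρ c) z)) := by
  rcases lt_trichotomy z t with hz | rfl | hz
  · rw [show (Ioi t).indicator 1 z + ({t} : Set ℝ).indicator (fun _ => ρ c) z = 0 by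
      simp [hz.not_gt, hz.ne]]
    exact h₀.comp <| tendsto_atBot_add_const_right _ c <|
      tendsto_natCast_atTop_atTop.atTop_mul_const_of_neg (sub_neg.2 hz)
  · simp
  · rw [show (Ioi t).indicator 1 z + ({t} : Set ℝ).indicator (fun _ => ρ c) z = 1 by
      simp [hz, hz.ne']]
    exact h₁.comp <| tendsto_atTop_add_const_right _ c <|
      tendsto_natCast_atTop_atTop.atTop_mul_const (sub_pos.2 hz)

theorem tendsto_integral_comp_natCast_mul_sub_add (hρ : Measurable ρ) {C : ℝ}
    (hC : ∀ z, |ρ z| ≤ C) (h₀ : Tendsto ρ atBot (𝓝 0)) (h₁ : Tendsto ρ atTop (𝓝 1))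
    (m : Measure ℝ) [IsFiniteMeasure m] (t c : ℝ) :
    Tendsto (fun a : ℕ => ∫ z, ρ (a * (z - t) + c) ∂m) atTop
      (𝓝 (m.real (Ioi t) + ρ c * m.real {t})) := by
  have hlim := tendsto_integral_of_dominated_convergence (μ := m) (fun _ => C)
    (fun a : ℕ => (hρ.comp (by fun_prop)).aestronglyMeasurable) (integrable_const C)
    (fun a => ae_of_all _ fun z => hC _)
    (ae_of_all _ (tendsto_comp_natCast_mul_sub_add h₀ h₁ t c))
  rwa [integral_add ((integrable_const 1).indicator measurableSet_Ioi)
      ((integrable_const _).indicator (measurableSet_singleton t)),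
    integral_indicator_one measurableSet_Ioi,
    integral_indicator_const _ (measurableSet_singleton t), smul_eq_mul, mul_comm] at hlim

theorem measure_eq_of_integral_comp_natCast_mul_add_eq (hρ : Measurable ρ) {C : ℝ}
    (hC : ∀ z, |ρ z| ≤ C) (h₀ : Tendsto ρ atBot (𝓝 0)) (h₁ : Tendsto ρ atTop (𝓝 1))
    (P Q : Measure ℝ) [IsFiniteMeasure P] [IsFiniteMeasure Q]
    (hPQ : ∀ (a : ℕ) (b : ℝ), ∫ z, ρ (a * z + b) ∂P = ∫ z, ρ (a * z + b) ∂Q) : P = Q := by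
  refine Measure.ext_of_Ici P Q fun t => ?_
  have hjump : ∀ c, P.real (Ioi t) + ρ c * P.real {t} = Q.real (Ioi t) + ρ c * Q.real {t} := by
    intro c
    refine tendsto_nhds_unique (tendsto_integral_comp_natCast_mul_sub_add hρ hC h₀ h₁ P t c) ?_
    convert tendsto_integral_comp_natCast_mul_sub_add hρ hC h₀ h₁ Q t c using 2 with a
    have hab : ∀ z : ℝ, (a : ℝ) * (z - t) + c = a * z + (c - a * t) := fun z => by ring
    simp only [hab, hPQ]
  have hIci : ∀ (m : Measure ℝ) [IsFiniteMeasure m],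
      Tendsto (fun c => m.real (Ioi t) + ρ c * m.real {t}) atTop (𝓝 (m.real (Ici t))) := by
    intro m _
    rw [← Ioi_union_left, measureReal_union (by simp) (measurableSet_singleton t)]
    simpa using (h₁.mul_const (m.real {t})).const_add (m.real (Ioi t))
  rw [← measureReal_eq_measureReal_iff]
  exact tendsto_nhds_unique (hIci P) ((hIci Q).congr fun c => (hjump c).symm)

theorem SignedMeasure.eq_zero_of_signedIntegral_comp_natCast_mul_add_eq_zero (hρ : Measurable ρ)
    {C : ℝ} (hC : ∀ z, |ρ z| ≤ C) (h₀ : Tendsto ρ atBot (𝓝 0)) (h₁ : Tendsto ρ atTop (𝓝 1))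
    (μ : SignedMeasure ℝ)
    (hμ : ∀ (a : ℕ) (b : ℝ), signedIntegral μ (fun z => ρ (a * z + b)) = 0) : μ = 0 := by
  rw [← μ.toSignedMeasure_toJordanDecomposition, JordanDecomposition.toSignedMeasure, sub_eq_zero]
  congr 1
  exact measure_eq_of_integral_comp_natCast_mul_add_eq hρ hC h₀ h₁ _ _
    fun a b => sub_eq_zero.1 (hμ a b)

end Discriminatory

theorem sigmoidal_discriminatory_and_dense_general
    (ψ₁ : ℝ → ℝ) (hψpos : ∀ z, 0 < ψ₁ z)
    (hψadm : ∀ R > 0, IsCompact {z : ℝ | ψ₁ z ≤ R})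
    (ρ : ℝ → ℝ) (hρ : Continuous ρ)
    (hbdd : ∃ C : ℝ, ∀ z, |ρ z| ≤ C)
    (hsig₀ : Tendsto ρ atBot (𝓝 0)) (hsig₁ : Tendsto ρ atTop (𝓝 1)) :
    (∀ μ : SignedMeasure ℝ, Integrable ψ₁ μ.totalVariation →
      (∀ (a : ℕ) (b : ℝ), signedIntegral μ (fun z => ρ ((a : ℝ) * z + b)) = 0) →
      μ = 0) ∧
    (∀ f : ℝ → ℝ, MemBpsi ψ₁ f → ∀ ε > (0 : ℝ),
      ∃ φ ∈ NNset ρ, ∀ z, |f z - φ z| ≤ ε * ψ₁ z) := by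
  obtain ⟨C, hC⟩ := hbdd
  refine ⟨fun μ _ hμ => SignedMeasure.eq_zero_of_signedIntegral_comp_natCast_mul_add_eq_zero
    hρ.measurable hC hsig₀ hsig₁ μ hμ, fun f hf ε hε => ?_⟩
  obtain ⟨c, hc, hψc⟩ := exists_pos_le_of_isCompact_sublevel hψpos hψadm
  obtain ⟨g, hg, ⟨Cg, hCg⟩, hfg⟩ := hf (ε / 3) (by positivity)
  obtain ⟨h, hh, hhc, hgh⟩ :=
    exists_hasCompactSupport_abs_sub_le_mul hψpos hψadm hg hCg (by positivity : 0 < ε / 3)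
  obtain ⟨φ, hφ, hhφ⟩ := exists_mem_NNset_abs_sub_le hC hsig₀ hsig₁ hh hhc
    (by positivity : 0 < ε / 3 * c)
  refine ⟨φ, hφ, fun z => ?_⟩
  calc |f z - φ z| ≤ |f z - g z| + |g z - h z| + |h z - φ z| :=
        (abs_sub_le _ (h z) _).trans (add_le_add_left (abs_sub_le _ _ _) _)
    _ ≤ ε / 3 * ψ₁ z + ε / 3 * ψ₁ z + ε / 3 * c := add_le_add (add_le_add (hfg z) (hgh z)) (hhφ z)
    _ ≤ ε * ψ₁ z := by nlinarith [hψc z]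

/-- **(Proposition 4.3, condition (A2)).**  Let `ψ₁ : ℝ → (0,∞)` be an admissible weight
function and `ρ : ℝ → ℝ` continuous, bounded and sigmoidal (`ρ(z) → 0` as `z → -∞` and
`ρ(z) → 1` as `z → ∞`) with `lim_{z → ±∞} |ρ(a z + b)|/ψ₁ z = 0` for all `a ∈ ℕ₀`,
`b ∈ ℝ`.  Then `ρ` is `ψ₁`-discriminatory, and consequently `𝒩𝒩^ρ` is dense in
`𝓑_{ψ₁}(ℝ)`. -/
theorem sigmoidal_discriminatory_and_dense
    (ψ₁ : ℝ → ℝ) (hψpos : ∀ z, 0 < ψ₁ z)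
    (hψadm : ∀ R > 0, IsCompact {z : ℝ | ψ₁ z ≤ R})
    (ρ : ℝ → ℝ) (hρ : Continuous ρ)
    (hbdd : ∃ C : ℝ, ∀ z, |ρ z| ≤ C)
    (hsig₀ : Tendsto ρ atBot (𝓝 0)) (hsig₁ : Tendsto ρ atTop (𝓝 1))
    (hlim : ∀ (a : ℕ) (b : ℝ),
      Tendsto (fun z => |ρ ((a : ℝ) * z + b)| / ψ₁ z) atTop (𝓝 0) ∧
      Tendsto (fun z => |ρ ((a : ℝ) * z + b)| / ψ₁ z) atBot (𝓝 0)) :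
    (∀ μ : SignedMeasure ℝ, Integrable ψ₁ μ.totalVariation →
      (∀ (a : ℕ) (b : ℝ), signedIntegral μ (fun z => ρ ((a : ℝ) * z + b)) = 0) →
      μ = 0) ∧
    (∀ f : ℝ → ℝ, MemBpsi ψ₁ f → ∀ ε > (0 : ℝ),
      ∃ φ ∈ NNset ρ, ∀ z, |f z - φ z| ≤ ε * ψ₁ z) :=
  sigmoidal_discriminatory_and_dense_general ψ₁ hψpos hψadm ρ hρ hbdd hsig₀ hsig₁
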